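/- Let U be a finite set, k ≥ 2 an integer, w : U → ℝ with 0 ≤ w(x) ≤ 1 for all x ∈ U and Σ_{x∈U} w(x) ≥ 3k/2, and let D : U × U → ℝ with D ≥ 0. Set α1 = 1.6 if k ≥ 12 and α1 = 13 if 2 ≤ k < 12, and suppose the weights are (1/α1)-individually fair, i.e., |w(u) − w(v)| ≤ D(u,v)/α1 for all u, v ∈ U. Define Z = Σ_{S ⊆ U, |S| ≥ k} P^U[S] and, for u ∈ U, p(u) = w(u) · (Σ_{S ⊆ U∖{u}, |S| ≥ k−1} P^{U∖{u}}[S] · (k/(|S|+1))) / Z (the probability that the Conditioning Mechanism with weights w selects u). Then Z > 0 and |p(u) − p(v)| ≤ D(u,v) for all u, v ∈ U, i.e., the Conditioning Mechanism is individually fair. -/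

import Mathlib

/-!
Write `U = W ∪ {u, v}` and let `B` be the expectation, over the random `S ⊆ W`, of the
probability `k / (|S| + 1)` (zero unless `|S| ≥ k - 1`) that an extra sampled element is selected.
Conditioning on whether the other one of `u, v` is sampled gives `p(u) - p(v) = (w u - w v) B / Z`,
so it suffices to show `B ≤ α1 Z`. If `u` or `v` is sampled with probability at least `1 / α1`,
this holds because `Z` dominates that probability times `P[|S| ≥ k - 1]`. Otherwise
`w u + w v < 2 / α1`, so `W` has weight `μ ≥ 3k/2 - 2/α1`; then
`B ≤ k E[1 / (|S| + 1)] ≤ k / μ` by integrating the generating function of `|S|`, while the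
Chernoff bound `Z ≥ P[|S| ≥ k] ≥ 1 - (3/2)^(k-1) e^(-μ/3)` and the choice of `α1` give
`k / μ ≤ α1 (1 - (3/2)^(k-1) e^(-μ/3))`.
-/

open Finset

/-- `Pw w S' S = (∏_{x∈S} w(x)) · (∏_{x∈S'∖S} (1 − w(x)))`. -/
def Pw {α : Type*} [DecidableEq α] (w : α → ℝ) (S' S : Finset α) : ℝ :=
  (∏ x ∈ S, w x) * (∏ x ∈ S' \ S, (1 - w x))

open Real

lemma three_halves_pow_le_exp (n : ℕ) : (3 / 2 : ℝ) ^ n ≤ exp (n / 2) := by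
  calc (3 / 2 : ℝ) ^ n ≤ exp (1 / 2) ^ n := by
        gcongr; linarith [add_one_le_exp (1 / 2 : ℝ)]
    _ = exp (n / 2) := by rw [← exp_nat_mul]; ring_nf

lemma natCast_div_add_mul_three_halves_pow_exp_le_of_le {a ν μ : ℝ} {n m : ℕ} (ha : 0 ≤ a)
    (hν : 0 < ν) (hνn : ν ≤ 3 * (n + 1) / 2) (hμ : ν + 3 * m / 2 ≤ μ) :
    ((n + m + 1 : ℕ) : ℝ) / μ + a * ((3 / 2) ^ (n + m) * exp (-μ / 3))
      ≤ ((n + 1 : ℕ) : ℝ) / ν + a * ((3 / 2) ^ n * exp (-ν / 3)) := by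
  have hm : (0 : ℝ) ≤ m := m.cast_nonneg
  have hcard : ((n + m + 1 : ℕ) : ℝ) / μ ≤ ((n + 1 : ℕ) : ℝ) / ν := by
    rw [div_le_div_iff₀ (by linarith) hν]
    push_cast
    nlinarith
  have hchernoff : (3 / 2 : ℝ) ^ (n + m) * exp (-μ / 3) ≤ (3 / 2) ^ n * exp (-ν / 3) :=
    calc (3 / 2 : ℝ) ^ (n + m) * exp (-μ / 3)
        ≤ (3 / 2) ^ n * (exp (m / 2) * exp (-μ / 3)) := by
          rw [pow_add, mul_assoc]; gcongr; exact three_halves_pow_le_exp m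
      _ ≤ (3 / 2) ^ n * exp (-ν / 3) := by
          rw [← exp_add]; gcongr; linarith
  gcongr

lemma natCast_div_add_mul_three_halves_pow_exp_le_self {k : ℕ} {α1 μ : ℝ} (hk : 2 ≤ k)
    (hα1 : α1 = if 12 ≤ k then 1.6 else 13) (hμ : 3 * (k : ℝ) / 2 - 2 / α1 ≤ μ) :
    0 < μ ∧ (k : ℝ) / μ + α1 * ((3 / 2) ^ (k - 1) * exp (-μ / 3)) ≤ α1 := by
  have hm : ∀ m : ℕ, (0 : ℝ) ≤ m := fun m => m.cast_nonneg
  -- Reduce to the smallest `k` of each case: `3·12/2 - 2/1.6 = 67/4` and `3·2/2 - 2/13 = 37/13`.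
  by_cases h12 : 12 ≤ k
  · obtain ⟨m, rfl⟩ : ∃ m, k = 11 + m + 1 := ⟨k - 12, by omega⟩
    rw [hα1, if_pos h12, Nat.add_sub_cancel] at *
    have hbase : (67 / 4 : ℝ) + 3 * m / 2 ≤ μ := by
      push_cast at hμ; norm_num at hμ; linarith
    have hexp : (157 : ℝ) ≤ exp (67 / 12) := by
      refine le_trans ?_ (sum_le_exp_of_nonneg (by norm_num) 7)
      simp only [sum_range_succ, sum_range_zero, Nat.factorial]
      norm_num
    refine ⟨by linarith [hm m], ?_⟩
    refine (natCast_div_add_mul_three_halves_pow_exp_le_of_le (by norm_num) (by norm_num)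
      (by norm_num) hbase).trans ?_
    rw [show -(67 / 4 : ℝ) / 3 = -(67 / 12) by ring, exp_neg]
    have := inv_anti₀ (by norm_num) hexp
    norm_num at this ⊢
    nlinarith
  · obtain ⟨m, rfl⟩ : ∃ m, k = 1 + m + 1 := ⟨k - 2, by omega⟩
    rw [hα1, if_neg h12, Nat.add_sub_cancel] at *
    have hbase : (37 / 13 : ℝ) + 3 * m / 2 ≤ μ := by
      push_cast at hμ; norm_num at hμ; linarith
    have hexp : (76 / 39 : ℝ) ≤ exp (37 / 39) := by linarith [add_one_le_exp (37 / 39 : ℝ)]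
    refine ⟨by linarith [hm m], ?_⟩
    refine (natCast_div_add_mul_three_halves_pow_exp_le_of_le (by norm_num) (by norm_num)
      (by norm_num) hbase).trans ?_
    rw [show -(37 / 13 : ℝ) / 3 = -(37 / 39) by ring, exp_neg]
    have := inv_anti₀ (by norm_num) hexp
    norm_num at this ⊢
    nlinarith

def atLeast (k m : ℕ) : ℝ := if k ≤ m then 1 else 0

-- The probability that an element is among the `k` chosen when it lies in a sample with
-- `m` other elements.
noncomputable def selectProb (k m : ℕ) : ℝ := if k - 1 ≤ m then k / ((m : ℝ) + 1) else 0

lemma selectProb_le_atLeast_succ (k m : ℕ) : selectProb k m ≤ atLeast k (m + 1) := by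
  unfold selectProb atLeast
  split_ifs with h h'
  · rw [div_le_one (by positivity)]; exact_mod_cast h'
  · omega
  · norm_num
  · rfl

lemma selectProb_le_mul_inv (k m : ℕ) : selectProb k m ≤ k * ((m : ℝ) + 1)⁻¹ := by
  unfold selectProb
  split_ifs
  · rfl
  · positivity

lemma selectProb_nonneg (k m : ℕ) : 0 ≤ selectProb k m := by
  unfold selectProb; split_ifs <;> positivity

lemma monotone_atLeast (k : ℕ) : Monotone (atLeast k) := by
  intro m n hmn
  unfold atLeast
  split_ifs <;> first | omega | norm_num

lemma atLeast_nonneg (k m : ℕ) : 0 ≤ atLeast k m := by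
  unfold atLeast; split_ifs <;> norm_num

section CardExpect

variable {α : Type*} [DecidableEq α] (w : α → ℝ)

-- The expectation of `g |S|` for the random `S ⊆ T` that contains each `x` independently
-- with probability `w x`.
def cardExpect (T : Finset α) (g : ℕ → ℝ) : ℝ :=
  ∑ S ∈ T.powerset, Pw w T S * g S.card

lemma sum_filter_Pw_eq_cardExpect (T : Finset α) (P : ℕ → Prop) [DecidablePred P]
    (g : ℕ → ℝ) :
    ∑ S ∈ T.powerset.filter (fun S => P S.card), Pw w T S * g S.card
      = cardExpect w T (fun m => if P m then g m else 0) := by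
  simp only [sum_filter, cardExpect, mul_ite, mul_zero]

lemma sum_filter_Pw_eq_cardExpect_atLeast (T : Finset α) (k : ℕ) :
    ∑ S ∈ T.powerset.filter (fun S => k ≤ S.card), Pw w T S = cardExpect w T (atLeast k) := by
  have := sum_filter_Pw_eq_cardExpect w T (k ≤ ·) (fun _ => 1)
  simp only [mul_one] at this
  exact this

lemma sum_filter_Pw_eq_cardExpect_selectProb (T : Finset α) (k : ℕ) :
    ∑ S ∈ T.powerset.filter (fun S => k - 1 ≤ S.card),
        Pw w T S * ((k : ℝ) / ((S.card : ℝ) + 1))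
      = cardExpect w T (selectProb k) :=
  sum_filter_Pw_eq_cardExpect w T (k - 1 ≤ ·) (fun m => (k : ℝ) / ((m : ℝ) + 1))

lemma cardExpect_add (T : Finset α) (g h : ℕ → ℝ) :
    cardExpect w T (fun m => g m + h m) = cardExpect w T g + cardExpect w T h := by
  simp only [cardExpect, mul_add, sum_add_distrib]

lemma cardExpect_const_mul (T : Finset α) (c : ℝ) (g : ℕ → ℝ) :
    cardExpect w T (fun m => c * g m) = c * cardExpect w T g := by
  simp only [cardExpect, mul_sum]
  exact sum_congr rfl fun S _ => by ring

lemma cardExpect_pow (T : Finset α) (x : ℝ) :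
    cardExpect w T (x ^ ·) = ∏ i ∈ T, (w i * x + (1 - w i)) := by
  rw [prod_add, cardExpect]
  refine sum_congr rfl fun S _ => ?_
  rw [prod_mul_distrib, prod_const, Pw]
  ring

lemma cardExpect_one (T : Finset α) : cardExpect w T (fun _ => 1) = 1 := by
  simpa using cardExpect_pow w T 1

lemma Pw_insert_of_notMem {a : α} {T t : Finset α} (ha : a ∉ T) (ht : t ⊆ T) :
    Pw w (insert a T) t = (1 - w a) * Pw w T t := by
  rw [Pw, Pw, insert_sdiff_of_notMem _ (fun h => ha (ht h)),
    prod_insert (fun h => ha (mem_sdiff.1 h).1)]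
  ring

lemma Pw_insert_insert {a : α} {T t : Finset α} (ha : a ∉ T) (ht : t ⊆ T) :
    Pw w (insert a T) (insert a t) = w a * Pw w T t := by
  rw [Pw, Pw, insert_sdiff_insert, sdiff_insert_of_notMem ha, prod_insert (fun h => ha (ht h))]
  ring

lemma cardExpect_insert {a : α} {T : Finset α} (ha : a ∉ T) (g : ℕ → ℝ) :
    cardExpect w (insert a T) g
      = cardExpect w T (fun m => (1 - w a) * g m + w a * g (m + 1)) := by
  rw [cardExpect, cardExpect, sum_powerset_insert ha, ← sum_add_distrib]
  refine sum_congr rfl fun t ht => ?_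
  rw [mem_powerset] at ht
  rw [Pw_insert_of_notMem w ha ht, Pw_insert_insert w ha ht,
    card_insert_of_notMem (fun h => ha (ht h))]
  ring

variable {w}

lemma Pw_nonneg (hw : ∀ x, 0 ≤ w x ∧ w x ≤ 1) (T S : Finset α) : 0 ≤ Pw w T S :=
  mul_nonneg (prod_nonneg fun x _ => (hw x).1) (prod_nonneg fun x _ => sub_nonneg.2 (hw x).2)

lemma cardExpect_nonneg (hw : ∀ x, 0 ≤ w x ∧ w x ≤ 1) (T : Finset α) {g : ℕ → ℝ}
    (hg : ∀ m, 0 ≤ g m) : 0 ≤ cardExpect w T g :=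
  sum_nonneg fun S _ => mul_nonneg (Pw_nonneg hw T S) (hg _)

lemma cardExpect_mono (hw : ∀ x, 0 ≤ w x ∧ w x ≤ 1) (T : Finset α) {g h : ℕ → ℝ}
    (hgh : ∀ m, g m ≤ h m) : cardExpect w T g ≤ cardExpect w T h :=
  sum_le_sum fun S _ => mul_le_mul_of_nonneg_left (hgh _) (Pw_nonneg hw T S)

lemma cardExpect_le_insert (hw : ∀ x, 0 ≤ w x ∧ w x ≤ 1) {a : α} {T : Finset α}
    (ha : a ∉ T) {g : ℕ → ℝ} (hg : Monotone g) :
    cardExpect w T g ≤ cardExpect w (insert a T) g := by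
  rw [cardExpect_insert w ha]
  refine cardExpect_mono hw T fun m => ?_
  nlinarith [(hw a).1, (hw a).2, hg m.le_succ]

lemma mul_cardExpect_succ_le_insert_insert (hw : ∀ x, 0 ≤ w x ∧ w x ≤ 1) {a b : α}
    {T : Finset α} (ha : a ∉ insert b T) (hb : b ∉ T) {g : ℕ → ℝ} (hg : Monotone g)
    (hg0 : ∀ m, 0 ≤ g m) :
    (1 - (1 - w a) * (1 - w b)) * cardExpect w T (fun m => g (m + 1))
      ≤ cardExpect w (insert a (insert b T)) g := by
  rw [cardExpect_insert w ha, cardExpect_insert w hb, ← cardExpect_const_mul]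
  refine cardExpect_mono hw T fun m => ?_
  have := hg (m + 1).le_succ
  nlinarith [mul_nonneg (hw a).1 (hw b).1,
    mul_nonneg (sub_nonneg.2 (hw a).2) (sub_nonneg.2 (hw b).2), hg0 m]

lemma cardExpect_pow_le_exp (hw : ∀ x, 0 ≤ w x ∧ w x ≤ 1) (T : Finset α) {x : ℝ}
    (hx0 : 0 ≤ x) :
    cardExpect w T (x ^ ·) ≤ exp (-(1 - x) * ∑ i ∈ T, w i) := by
  rw [cardExpect_pow, mul_sum, exp_sum]
  refine prod_le_prod (fun i _ => ?_) (fun i _ => ?_)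
  · nlinarith [(hw i).1, (hw i).2]
  · linarith [add_one_le_exp (-(1 - x) * w i)]

lemma cardExpect_ite_lt_le (hw : ∀ x, 0 ≤ w x ∧ w x ≤ 1) (T : Finset α) (k : ℕ) :
    cardExpect w T (fun m => if m < k then 1 else 0)
      ≤ (3 / 2) ^ (k - 1) * exp (-(∑ i ∈ T, w i) / 3) := by
  have hpointwise : ∀ m, (if m < k then 1 else 0 : ℝ) ≤ (3 / 2) ^ (k - 1) * (2 / 3) ^ m := by
    intro m
    split_ifs with hm
    · calc (1 : ℝ) = (3 / 2) ^ (k - 1) * (2 / 3) ^ (k - 1) := by rw [← mul_pow]; norm_num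
        _ ≤ (3 / 2) ^ (k - 1) * (2 / 3) ^ m := by 
          exact mul_le_mul_of_nonneg_left
            (pow_le_pow_of_le_one (by norm_num) (by norm_num) (by omega)) (by positivity)
    · positivity
  calc cardExpect w T (fun m => if m < k then 1 else 0)
      ≤ (3 / 2) ^ (k - 1) * cardExpect w T ((2 / 3) ^ ·) := by
        rw [← cardExpect_const_mul]; exact cardExpect_mono hw T hpointwise
    _ ≤ (3 / 2) ^ (k - 1) * exp (-(∑ i ∈ T, w i) / 3) := by
        gcongr
        refine (cardExpect_pow_le_exp hw T (by norm_num)).trans_eq ?_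
        ring_nf

lemma cardExpect_inv_succ_le (hw : ∀ x, 0 ≤ w x ∧ w x ≤ 1) (T : Finset α)
    (hμ : 0 < ∑ i ∈ T, w i) :
    cardExpect w T (fun m => ((m : ℝ) + 1)⁻¹) ≤ (∑ i ∈ T, w i)⁻¹ := by
  set μ := ∑ i ∈ T, w i
  -- `1 / (m + 1) = ∫₀¹ x ^ m`, so the left side is the integral of the generating function.
  calc cardExpect w T (fun m => ((m : ℝ) + 1)⁻¹)
      = ∫ x in (0 : ℝ)..1, cardExpect w T (x ^ ·) := by
        simp only [cardExpect]
        rw [intervalIntegral.integral_finsetSum fun S _ =>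
          (by fun_prop : Continuous _).intervalIntegrable _ _]
        refine sum_congr rfl fun S _ => ?_
        simp
    _ ≤ ∫ x in (0 : ℝ)..1, exp (μ * x - μ) := by
        refine intervalIntegral.integral_mono_on zero_le_one ?_
          ((by fun_prop : Continuous _).intervalIntegrable _ _) fun x hx => ?_
        · simp only [cardExpect_pow]; exact (by fun_prop : Continuous _).intervalIntegrable _ _
        · exact (cardExpect_pow_le_exp hw T hx.1).trans_eq (by congr 1; ring)
    _ = μ⁻¹ * (1 - exp (-μ)) := by
        rw [intervalIntegral.integral_comp_mul_sub (f := exp) hμ.ne', integral_exp]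
        simp
    _ ≤ μ⁻¹ := mul_le_of_le_one_right (inv_nonneg.2 hμ.le) (by linarith [exp_pos (-μ)])

lemma one_sub_le_cardExpect_atLeast (hw : ∀ x, 0 ≤ w x ∧ w x ≤ 1) (T : Finset α)
    (k : ℕ) :
    1 - (3 / 2) ^ (k - 1) * exp (-(∑ i ∈ T, w i) / 3) ≤ cardExpect w T (atLeast k) := by
  have hsplit : (fun m => atLeast k m + if m < k then 1 else 0) = fun _ => 1 := by
    funext m
    unfold atLeast
    split_ifs <;> first | omega | norm_num
  have := cardExpect_one w T
  rw [← hsplit, cardExpect_add] at this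
  linarith [cardExpect_ite_lt_le hw T k]

lemma cardExpect_atLeast_pos (hw : ∀ x, 0 ≤ w x ∧ w x ≤ 1) (T : Finset α) {k : ℕ}
    (hk : 1 ≤ k) (hμ : 3 * (k : ℝ) / 2 ≤ ∑ i ∈ T, w i) :
    0 < cardExpect w T (atLeast k) := by
  have htail : (3 / 2 : ℝ) ^ (k - 1) * exp (-(∑ i ∈ T, w i) / 3) < 1 :=
    calc (3 / 2 : ℝ) ^ (k - 1) * exp (-(∑ i ∈ T, w i) / 3)
        ≤ exp (((k - 1 : ℕ) : ℝ) / 2) * exp (-(∑ i ∈ T, w i) / 3) := by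
          gcongr; exact three_halves_pow_le_exp _
      _ < 1 := by
          rw [← exp_add, exp_lt_one_iff, Nat.cast_sub hk]
          push_cast
          linarith
  linarith [one_sub_le_cardExpect_atLeast hw T k]

lemma mul_cardExpect_insert_sub_mul_cardExpect_insert {u v : α} {W : Finset α} (hu : u ∉ W)
    (hv : v ∉ W) (g : ℕ → ℝ) :
    w u * cardExpect w (insert v W) g - w v * cardExpect w (insert u W) g
      = (w u - w v) * cardExpect w W g := by
  rw [cardExpect_insert w hv, cardExpect_insert w hu]
  simp only [cardExpect, mul_sum, ← sum_sub_distrib]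
  exact sum_congr rfl fun S _ => by ring

end CardExpect

section Fairness

variable {α : Type*} [DecidableEq α] {w : α → ℝ}

lemma cardExpect_selectProb_le_of_one_le {a : ℝ} (hw : ∀ x, 0 ≤ w x ∧ w x ≤ 1) (k : ℕ)
    {u v : α} {W : Finset α} (hu : u ∉ insert v W) (hv : v ∉ W)
    (ha : 1 ≤ a * (1 - (1 - w u) * (1 - w v))) :
    cardExpect w W (selectProb k) ≤ a * cardExpect w (insert u (insert v W)) (atLeast k) := by
  have hs : 0 ≤ 1 - (1 - w u) * (1 - w v) := by nlinarith [hw u, hw v]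
  have ha0 : 0 ≤ a := by nlinarith
  have hq0 : 0 ≤ cardExpect w W (fun m => atLeast k (m + 1)) :=
    cardExpect_nonneg hw W fun m => atLeast_nonneg k (m + 1)
  calc cardExpect w W (selectProb k)
      ≤ cardExpect w W (fun m => atLeast k (m + 1)) :=
        cardExpect_mono hw W (selectProb_le_atLeast_succ k)
    _ ≤ a * ((1 - (1 - w u) * (1 - w v)) * cardExpect w W (fun m => atLeast k (m + 1))) := by
        rw [← mul_assoc]; exact le_mul_of_one_le_left hq0 ha
    _ ≤ a * cardExpect w (insert u (insert v W)) (atLeast k) := by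
        gcongr
        exact mul_cardExpect_succ_le_insert_insert hw hu hv (monotone_atLeast k)
          (atLeast_nonneg k)

lemma cardExpect_selectProb_le_of_margin {a : ℝ} (hw : ∀ x, 0 ≤ w x ∧ w x ≤ 1) {k : ℕ}
    {u v : α} {W : Finset α} (hu : u ∉ insert v W) (hv : v ∉ W) (ha : 0 ≤ a)
    (hμ : 0 < ∑ i ∈ W, w i)
    (hmargin : (k : ℝ) / ∑ i ∈ W, w i
      + a * ((3 / 2) ^ (k - 1) * exp (-(∑ i ∈ W, w i) / 3)) ≤ a) :
    cardExpect w W (selectProb k) ≤ a * cardExpect w (insert u (insert v W)) (atLeast k) :=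
  calc cardExpect w W (selectProb k)
      ≤ k * cardExpect w W (fun m => ((m : ℝ) + 1)⁻¹) := by
        rw [← cardExpect_const_mul]; exact cardExpect_mono hw W (selectProb_le_mul_inv k)
    _ ≤ k / ∑ i ∈ W, w i := by
        rw [div_eq_mul_inv]; gcongr; exact cardExpect_inv_succ_le hw W hμ
    _ ≤ a * (1 - (3 / 2) ^ (k - 1) * exp (-(∑ i ∈ W, w i) / 3)) := by linarith
    _ ≤ a * cardExpect w W (atLeast k) := by
        gcongr; exact one_sub_le_cardExpect_atLeast hw W k
    _ ≤ a * cardExpect w (insert u (insert v W)) (atLeast k) := by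
        gcongr
        exact (cardExpect_le_insert hw hv (monotone_atLeast k)).trans
          (cardExpect_le_insert hw hu (monotone_atLeast k))

lemma cardExpect_selectProb_le (hw : ∀ x, 0 ≤ w x ∧ w x ≤ 1) {k : ℕ} {α1 : ℝ}
    (hk : 2 ≤ k) (hα1 : α1 = if 12 ≤ k then 1.6 else 13) {u v : α} {W : Finset α}
    (hu : u ∉ insert v W) (hv : v ∉ W)
    (hsum : 3 * (k : ℝ) / 2 ≤ ∑ i ∈ insert u (insert v W), w i) :
    cardExpect w W (selectProb k) ≤ α1 * cardExpect w (insert u (insert v W)) (atLeast k) := by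
  have hα1pos : 0 < α1 := by rw [hα1]; split_ifs <;> norm_num
  -- `1 - (1 - w u) * (1 - w v)` is the probability that `u` or `v` is sampled.
  by_cases hlarge : 1 ≤ α1 * (1 - (1 - w u) * (1 - w v))
  · exact cardExpect_selectProb_le_of_one_le hw k hu hv hlarge
  · have huv : w u + w v ≤ 2 / α1 := by
      rw [le_div_iff₀ hα1pos]
      nlinarith [mul_nonneg hα1pos.le (mul_nonneg (hw v).1 (sub_nonneg.2 (hw u).2)),
        mul_nonneg hα1pos.le (mul_nonneg (hw u).1 (sub_nonneg.2 (hw v).2))]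
    rw [sum_insert hu, sum_insert hv] at hsum
    obtain ⟨hμ, hmargin⟩ := natCast_div_add_mul_three_halves_pow_exp_le_self
      (μ := ∑ i ∈ W, w i) hk hα1 (by linarith)
    exact cardExpect_selectProb_le_of_margin hw hu hv hα1pos.le hμ hmargin

end Fairness

lemma exists_eq_insert_insert {α : Type*} [DecidableEq α] {U : Finset α} {u v : α}
    (hu : u ∈ U) (hv : v ∈ U) (huv : u ≠ v) :
    ∃ W, u ∉ insert v W ∧ v ∉ W ∧ U \ {u} = insert v W ∧ U \ {v} = insert u W
      ∧ U = insert u (insert v W) := by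
  have hvu : v ∈ U.erase u := mem_erase.2 ⟨huv.symm, hv⟩
  refine ⟨(U.erase u).erase v, by simp [huv], by simp, ?_, ?_, ?_⟩
  · rw [sdiff_singleton_eq_erase, insert_erase hvu]
  · rw [sdiff_singleton_eq_erase, erase_right_comm, insert_erase (mem_erase.2 ⟨huv, hu⟩)]
  · rw [insert_erase hvu, insert_erase hu]

theorem stmt17_general {α : Type*} [Fintype α] [DecidableEq α] (w : α → ℝ)
    (hw : ∀ x, 0 ≤ w x ∧ w x ≤ 1) (k : ℕ) (hk : 2 ≤ k)
    (hsum : 3 * (k : ℝ) / 2 ≤ ∑ x, w x)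
    (D : α → α → ℝ)
    (α1 : ℝ) (hα1 : α1 = if 12 ≤ k then 1.6 else 13)
    (hfairw : ∀ u v, |w u - w v| ≤ D u v / α1)
    (Z : ℝ)
    (hZ : Z = ∑ S ∈ (univ : Finset α).powerset.filter (fun S => k ≤ S.card), Pw w univ S)
    (p : α → ℝ)
    (hp : ∀ u, p u = w u *
      (∑ S ∈ ((univ : Finset α) \ {u}).powerset.filter (fun S => k - 1 ≤ S.card),
        Pw w (univ \ {u}) S * ((k : ℝ) / ((S.card : ℝ) + 1))) / Z) :
    0 < Z ∧ ∀ u v : α, |p u - p v| ≤ D u v := by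
  have hα1pos : 0 < α1 := by rw [hα1]; split_ifs <;> norm_num
  rw [sum_filter_Pw_eq_cardExpect_atLeast] at hZ
  have hZpos : 0 < Z := hZ ▸ cardExpect_atLeast_pos hw univ (by omega) hsum
  refine ⟨hZpos, fun u v => ?_⟩
  have hD : 0 ≤ D u v / α1 := (abs_nonneg _).trans (hfairw u v)
  rcases eq_or_ne u v with rfl | huv
  · simpa using (le_div_iff₀ hα1pos).1 hD
  obtain ⟨W, huW, hvW, hUu, hUv, hU⟩ := exists_eq_insert_insert (mem_univ u) (mem_univ v) huv
  have hdiff : p u - p v = (w u - w v) * cardExpect w W (selectProb k) / Z := by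
    rw [hp u, hp v, ← sub_div, sum_filter_Pw_eq_cardExpect_selectProb,
      sum_filter_Pw_eq_cardExpect_selectProb, hUu, hUv,
      mul_cardExpect_insert_sub_mul_cardExpect_insert (fun h => huW (mem_insert_of_mem h)) hvW]
  have hB : cardExpect w W (selectProb k) ≤ α1 * Z := by
    rw [hZ, hU]; exact cardExpect_selectProb_le hw hk hα1 huW hvW (hU ▸ hsum)
  have hB0 : 0 ≤ cardExpect w W (selectProb k) := cardExpect_nonneg hw W (selectProb_nonneg k)
  rw [hdiff, abs_div, abs_mul, abs_of_pos hZpos, abs_of_nonneg hB0, div_le_iff₀ hZpos]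
  calc |w u - w v| * cardExpect w W (selectProb k) ≤ D u v / α1 * (α1 * Z) :=
        mul_le_mul (hfairw u v) hB hB0 hD
    _ = D u v * Z := by field_simp

/-- individual fairness of the Conditioning Mechanism. For `k ≥ 2`,
weights in `[0,1]` with `Σ_{x∈U} w(x) ≥ 3k/2` that are `(1/α1)`-individually fair
(`α1 = 1.6` if `k ≥ 12`, `α1 = 13` if `2 ≤ k < 12`), the normalizer
`Z = Σ_{S ⊆ U, |S| ≥ k} P^U[S]` is positive and the selection probabilities
`p(u) = w(u)·(Σ_{S ⊆ U∖{u}, |S| ≥ k−1} P^{U∖{u}}[S]·(k/(|S|+1)))/Z` satisfy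
`|p(u) − p(v)| ≤ D(u,v)` for all `u, v`. -/
theorem stmt17 {α : Type*} [Fintype α] [DecidableEq α] (w : α → ℝ)
    (hw : ∀ x, 0 ≤ w x ∧ w x ≤ 1) (k : ℕ) (hk : 2 ≤ k)
    (hsum : 3 * (k : ℝ) / 2 ≤ ∑ x, w x)
    (D : α → α → ℝ) (hD : ∀ u v, 0 ≤ D u v)
    (α1 : ℝ) (hα1 : α1 = if 12 ≤ k then 1.6 else 13)
    (hfairw : ∀ u v, |w u - w v| ≤ D u v / α1)
    (Z : ℝ)
    (hZ : Z = ∑ S ∈ (univ : Finset α).powerset.filter (fun S => k ≤ S.card), Pw w univ S)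
    (p : α → ℝ)
    (hp : ∀ u, p u = w u *
      (∑ S ∈ ((univ : Finset α) \ {u}).powerset.filter (fun S => k - 1 ≤ S.card),
        Pw w (univ \ {u}) S * ((k : ℝ) / ((S.card : ℝ) + 1))) / Z) :
    0 < Z ∧ ∀ u v : α, |p u - p v| ≤ D u v :=
  stmt17_general w hw k hk hsum D α1 hα1 hfairw Z hZ p hp
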